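/- Let $\Phi_1 : X \to Y$ and $\Phi_2 : Y \to Z$ be dill maps whose invariants $Z$ and $D$ are well-defined. Then $Z(\Phi_2 \circ \Phi_1) = Z(\Phi_1) \cdot Z(\Phi_2)$. -/
import Mathlib


open Filter Topology

section Defs

variable {A : Type*} {B : Type*} {C : Type*}

/-- The one-sided shift map. -/
def shift (x : ℕ → A) : ℕ → A := fun n => x (n + 1)

/-- A (one-sided) subshift: a closed, shift-invariant set of configurations. -/
def Subshift [TopologicalSpace A] (X : Set (ℕ → A)) : Prop :=
  IsClosed X ∧ ∀ x ∈ X, shift x ∈ X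

/-- `X` is uniformly recurrent: every pattern occurring in `X` occurs in every
sufficiently long window of every point of `X`. -/
def UniformlyRecurrent (X : Set (ℕ → A)) : Prop :=
  ∀ x ∈ X, ∀ l : ℕ, ∃ N : ℕ, ∀ y ∈ X, ∃ i < N, ∀ k < l, y (i + k) = x k

/-- A block map: a continuous shift-commuting map. -/
def BlockMap [TopologicalSpace A] [TopologicalSpace B] (X : Set (ℕ → A)) (Y : Set (ℕ → B))
    (f : (ℕ → A) → (ℕ → B)) : Prop :=
  Set.MapsTo f X Y ∧ ContinuousOn f X ∧ ∀ x ∈ X, f (shift x) = shift (f x)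

/-- `s` is a cocycle for `Φ` on `X`: `Φ (σ x) = σ^(s x) (Φ x)`. -/
def IsCocycle (X : Set (ℕ → A)) (Φ : (ℕ → A) → (ℕ → B)) (s : (ℕ → A) → ℕ) : Prop :=
  ∀ x ∈ X, ∀ n : ℕ, Φ (shift x) n = Φ x (n + s x)

/-- A dill map: a continuous map with a continuous cocycle which is nontrivial
along every orbit. -/
def DillMap [TopologicalSpace A] [TopologicalSpace B] (X : Set (ℕ → A)) (Y : Set (ℕ → B))
    (Φ : (ℕ → A) → (ℕ → B)) : Prop :=
  Set.MapsTo Φ X Y ∧ ContinuousOn Φ X ∧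
    ∃ s : (ℕ → A) → ℕ, ContinuousOn s X ∧ IsCocycle X Φ s ∧
      ∀ x ∈ X, ∃ n : ℕ, 0 < s (shift^[n] x)

/-- Continuity (local constancy) of a word-valued function on `X`. -/
def WordContinuousOn (φ : (ℕ → A) → List B) (X : Set (ℕ → A)) : Prop :=
  ∀ x ∈ X, ∃ R : ℕ, ∀ y ∈ X, (∀ k ≤ R, y k = x k) → φ y = φ x

/-- `φ` is an implementation of `Φ` on `X`:
`Φ x = φ x ++ φ (σ x) ++ φ (σ² x) ++ ⋯`, expressed coordinatewise. -/
def IsImplementation (X : Set (ℕ → A)) (Φ : (ℕ → A) → (ℕ → B))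
    (φ : (ℕ → A) → List B) : Prop :=
  WordContinuousOn φ X ∧ ∀ x ∈ X, ∀ n : ℕ,
    Φ x n = if h : n < (φ x).length then (φ x).get ⟨n, h⟩
            else Φ (shift x) (n - (φ x).length)

/-- `ⁿφ(x) = φ(x) φ(σ x) ⋯ φ(σ^(n-1) x)`. -/
def iterWord (φ : (ℕ → A) → List B) (x : ℕ → A) : ℕ → List B
  | 0 => []
  | n + 1 => iterWord φ x n ++ φ (shift^[n] x)

/-- The invariant `Z`: `|ⁿφ(x)|/n → lam` for every `x ∈ X`. -/
def HasZ (X : Set (ℕ → A)) (φ : (ℕ → A) → List B) (lam : ℝ) : Prop :=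
  ∀ x ∈ X, Tendsto (fun n : ℕ => ((iterWord φ x n).length : ℝ) / n) atTop (𝓝 lam)

/-- `D` is a deviation bound: `| |ⁿφ(x)| - lam·n | ≤ D` for all `x ∈ X`, `n`. -/
def HasDBound (X : Set (ℕ → A)) (φ : (ℕ → A) → List B) (lam D : ℝ) : Prop :=
  ∀ x ∈ X, ∀ n : ℕ, |((iterWord φ x n).length : ℝ) - lam * n| ≤ D

/-- `R` is an in-radius bound for `φ` on `X`: `φ x` only depends on `x_[0,R]`. -/
def HasInRadius (X : Set (ℕ → A)) (φ : (ℕ → A) → List B) (R : ℕ) : Prop :=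
  ∀ x ∈ X, ∀ y ∈ X, (∀ k ≤ R, x k = y k) → φ x = φ y

/-- Almost equivalence: images of every point agree up to shifts. -/
def AlmostEquiv (X : Set (ℕ → A)) (Φ Ψ : (ℕ → A) → (ℕ → B)) : Prop :=
  ∀ x ∈ X, ∃ i j : ℕ, shift^[i] (Φ x) = shift^[j] (Ψ x)

/-- The implementation of the composition of two dill maps. -/
def compImpl (φ₁ : (ℕ → A) → List B) (Φ₁ : (ℕ → A) → (ℕ → B))
    (φ₂ : (ℕ → B) → List C) (x : ℕ → A) : List C :=
  iterWord φ₂ (Φ₁ x) (φ₁ x).length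

/-- Extension of a substitution to words. -/
def wordApply (τ : A → List A) (w : List A) : List A := (w.map τ).flatten

/-- Iterated image `τⁿ(a)` of a letter. -/
def subPow (τ : A → List A) : ℕ → A → List A
  | 0, a => [a]
  | n + 1, a => wordApply τ (subPow τ n a)

/-- The language of the substitution `τ`: infixes of the `τⁿ(a)`. -/
def InLanguage (τ : A → List A) (w : List A) : Prop :=
  ∃ a n, w <:+: subPow τ n a

/-- The one-sided subshift of the substitution `τ`. -/
def Xsub (τ : A → List A) : Set (ℕ → A) :=
  {x | ∀ i l : ℕ, InLanguage τ (List.ofFn fun k : Fin l => x (i + k))}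

/-- Primitivity of a substitution. -/
def Primitive (τ : A → List A) : Prop :=
  ∃ N, ∀ n ≥ N, ∀ a b : A, a ∈ subPow τ n b

/-- The word `w` occurs in `x` at position `i`. -/
def occursAt (w : List A) (x : ℕ → A) (i : ℕ) : Prop :=
  w = List.ofFn fun k : Fin w.length => x (i + k)

/-- The action of a (non-erasing) substitution on one-sided configurations. -/
def subApply [Inhabited A] (τ : A → List A) (x : ℕ → A) : ℕ → A :=
  fun n => (wordApply τ (List.ofFn fun k : Fin (n + 1) => x k)).getD n default

end Defs

set_option linter.unusedSectionVars false

section Aux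

variable {A : Type*} {B : Type*} {C : Type*} [TopologicalSpace A] [TopologicalSpace B] [TopologicalSpace C]

lemma shift_iter_apply (y : ℕ → A) (k n : ℕ) : (shift^[k] y) n = y (n + k) := by
  induction k generalizing y n with
  | zero => rfl
  | succ k ih =>
    rw [Function.iterate_succ_apply, ih]
    rfl

lemma iterWord_add (φ : (ℕ → A) → List B) (y : ℕ → A) (a b : ℕ) :
    iterWord φ y (a + b) = iterWord φ y a ++ iterWord φ (shift^[a] y) b := by
  induction b with
  | zero => simp [iterWord]
  | succ b ih =>
    show iterWord φ y (a + b) ++ φ (shift^[a + b] y) = _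
    rw [ih, Nat.add_comm a b, Function.iterate_add_apply]
    simp [iterWord, List.append_assoc]

lemma mem_iter {X : Set (ℕ → A)} (hX : Subshift X) {x : ℕ → A} (hx : x ∈ X) (n : ℕ) :
    shift^[n] x ∈ X := by
  induction n with
  | zero => exact hx
  | succ n ih =>
    rw [Function.iterate_succ_apply']
    exact hX.2 _ ih

lemma impl_shift {X : Set (ℕ → A)} {Φ : (ℕ → A) → (ℕ → B)} {φ : (ℕ → A) → List B}
    (h : IsImplementation X Φ φ) {x : ℕ → A} (hx : x ∈ X) :
    Φ (shift x) = shift^[(φ x).length] (Φ x) := by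
  funext m
  rw [shift_iter_apply]
  have := h.2 x hx (m + (φ x).length)
  rw [dif_neg (by omega)] at this
  simpa using this.symm

lemma impl_shift_iter {X : Set (ℕ → A)} (hX : Subshift X) {Φ : (ℕ → A) → (ℕ → B)}
    {φ : (ℕ → A) → List B} (h : IsImplementation X Φ φ) {x : ℕ → A} (hx : x ∈ X) (n : ℕ) :
    Φ (shift^[n] x) = shift^[(iterWord φ x n).length] (Φ x) := by
  induction n with
  | zero => rfl
  | succ n ih =>
    rw [Function.iterate_succ_apply', impl_shift h (mem_iter hX hx n), ih,
      ← Function.iterate_add_apply]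
    congr 1
    simp [iterWord, Nat.add_comm]

lemma comp_iterWord {X : Set (ℕ → A)} (hX : Subshift X) {Φ₁ : (ℕ → A) → (ℕ → B)}
    {φ₁ : (ℕ → A) → List B} (h : IsImplementation X Φ₁ φ₁)
    (φ₂ : (ℕ → B) → List C) {x : ℕ → A} (hx : x ∈ X) (n : ℕ) :
    iterWord (compImpl φ₁ Φ₁ φ₂) x n = iterWord φ₂ (Φ₁ x) (iterWord φ₁ x n).length := by
  induction n with
  | zero => rfl
  | succ n ih =>
    show iterWord (compImpl φ₁ Φ₁ φ₂) x n ++ compImpl φ₁ Φ₁ φ₂ (shift^[n] x) = _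
    rw [ih]
    unfold compImpl
    rw [impl_shift_iter hX h hx n]
    have hlen : (iterWord φ₁ x (n + 1)).length
        = (iterWord φ₁ x n).length + (φ₁ (shift^[n] x)).length := by
      simp [iterWord]
    rw [hlen, iterWord_add]

end Aux

/-- multiplicativity of the invariant `Z` under composition of
dill maps whose invariants `Z` and `D` are well-defined. -/
theorem stmt8 {A B C : Type*} [Fintype A] [Fintype B] [Fintype C]
    [TopologicalSpace A] [DiscreteTopology A] [TopologicalSpace B] [DiscreteTopology B]
    [TopologicalSpace C] [DiscreteTopology C]
    (X : Set (ℕ → A)) (Y : Set (ℕ → B)) (Z : Set (ℕ → C))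
    (hX : Subshift X) (hY : Subshift Y) (hZ : Subshift Z)
    (Φ₁ : (ℕ → A) → (ℕ → B)) (Φ₂ : (ℕ → B) → (ℕ → C))
    (hΦ₁ : DillMap X Y Φ₁) (hΦ₂ : DillMap Y Z Φ₂)
    (φ₁ : (ℕ → A) → List B) (φ₂ : (ℕ → B) → List C)
    (hφ₁ : IsImplementation X Φ₁ φ₁) (hφ₂ : IsImplementation Y Φ₂ φ₂)
    (lam₁ lam₂ : ℝ) (hZ₁ : HasZ X φ₁ lam₁) (hZ₂ : HasZ Y φ₂ lam₂)
    (hD₁ : ∃ D₁ : ℝ, HasDBound X φ₁ lam₁ D₁) (hD₂ : ∃ D₂ : ℝ, HasDBound Y φ₂ lam₂ D₂) :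
    HasZ X (compImpl φ₁ Φ₁ φ₂) (lam₁ * lam₂) := by
  obtain ⟨D₁, hD₁⟩ := hD₁
  obtain ⟨D₂, hD₂⟩ := hD₂
  intro x hx
  have hy : Φ₁ x ∈ Y := hΦ₁.1 hx
  set C : ℝ := D₂ + |lam₂| * D₁ with hC
  have key : ∀ n : ℕ,
      |((iterWord (compImpl φ₁ Φ₁ φ₂) x n).length : ℝ) - lam₁ * lam₂ * n| ≤ C := by
    intro n
    rw [comp_iterWord hX hφ₁ φ₂ hx n]
    set m := (iterWord φ₁ x n).length with hm
    have h2 := hD₂ _ hy m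
    have h1 := hD₁ x hx n
    calc |((iterWord φ₂ (Φ₁ x) m).length : ℝ) - lam₁ * lam₂ * n|
        = |(((iterWord φ₂ (Φ₁ x) m).length : ℝ) - lam₂ * m)
            + lam₂ * ((m : ℝ) - lam₁ * n)| := by congr 1; ring
      _ ≤ |((iterWord φ₂ (Φ₁ x) m).length : ℝ) - lam₂ * m|
            + |lam₂ * ((m : ℝ) - lam₁ * n)| := abs_add_le _ _
      _ ≤ D₂ + |lam₂| * D₁ := by
            rw [abs_mul]
            gcongr
  have h0 : Tendsto (fun n : ℕ => C / n) atTop (𝓝 0) :=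
    tendsto_const_div_atTop_nhds_zero_nat C
  rw [← tendsto_sub_nhds_zero_iff]
  apply squeeze_zero_norm' ?_ h0
  filter_upwards [eventually_gt_atTop 0] with n hn
  have hn' : (0 : ℝ) < n := by exact_mod_cast hn
  rw [Real.norm_eq_abs]
  have heq : ((iterWord (compImpl φ₁ Φ₁ φ₂) x n).length : ℝ) / n - lam₁ * lam₂
      = (((iterWord (compImpl φ₁ Φ₁ φ₂) x n).length : ℝ) - lam₁ * lam₂ * n) / n := by
    field_simp
  rw [heq, abs_div, abs_of_pos hn']
  exact (div_le_div_iff_of_pos_right hn').mpr (key n)
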